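/- arXiv:2208.10531 — 2 statements merged into one kernel-verified Lean document; each statement's English description precedes it below -/
import Mathlib

section
/- Let (Ω, μ) be a measure space and let p_s, p_t, p_sub : Ω → ℝ≥0 be measurable probability densities with respect to μ (each integrating to 1). Let φ : Ω → ℝ be measurable with 0 ≤ φ(ω) ≤ C for all ω, where C ≥ 0 is a constant (Assumption 1, with φ = −log p̂). Assume ∫ p_sub φ dμ ≤ ∫ p_s φ dμ (Assumption 2, that the target subnetwork is superior to the source network on the target data). Then ∫ p_t φ dμ ≤ ∫ p_s φ dμ + C·√(2·D_JS(p_t·μ ‖ p_sub·μ)), where D_JS denotes the Jensen–Shannon divergence. (This is the core inequality of the paper's Theorem 1: the target loss is bounded by the source loss plus C√(2 D_JS) between the target and subnetwork distributions.) -/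
/-!
Because `0 ≤ φ ≤ C`, the gap `∫ (p_t - p_sub) φ` is at most `C` times the total variation
distance `½ ∫ |p_t - p_sub|`, and Assumption 2 turns `∫ p_sub φ` into `∫ p_s φ`.
The total variation distance is at most `√(2 D_JS)`: writing `a = p_t`, `b = p_sub`,
`m = (a + b) / 2` and `t = (a - b) / (a + b)`, the pointwise Jensen–Shannon integrand is
`m ((1 + t) log (1 + t) + (1 - t) log (1 - t)) ≥ m t² = (a - b)² / (2 (a + b))`,
and the AM–GM inequality `c |a - b| ≤ (a - b)² / (a + b) + c² (a + b) / 4`, integrated and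
evaluated at `c = ∫ |a - b|`, gives `(∫ |a - b|)² ≤ 8 D_JS`.
-/

open MeasureTheory ProbabilityTheory
open scoped NNReal ENNReal Classical

/-- The Kullback–Leibler divergence `KL(P‖Q)` of two measures: the integral of the
log-likelihood ratio `log (dP/dQ)` with respect to `P` when `P ≪ Q` and this
log-likelihood ratio is integrable, and `∞` otherwise. -/
noncomputable def klDiv {Ω : Type*} [MeasurableSpace Ω] (P Q : Measure Ω) : ℝ≥0∞ :=
  if P ≪ Q ∧ Integrable (llr P Q) P then ENNReal.ofReal (∫ ω, llr P Q ω ∂P) else ⊤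

/-- The Jensen–Shannon divergence `D_JS(P‖Q) = ½·KL(P‖M) + ½·KL(Q‖M)`,
where `M = ½(P + Q)`. -/
noncomputable def jsDiv {Ω : Type*} [MeasurableSpace Ω] (P Q : Measure Ω) : ℝ≥0∞ :=
  klDiv P ((2 : ℝ≥0∞)⁻¹ • (P + Q)) / 2 + klDiv Q ((2 : ℝ≥0∞)⁻¹ • (P + Q)) / 2

namespace Real

lemma sq_le_one_add_mul_log_add_one_sub_mul_log {t : ℝ} (ht : t ∈ Set.Icc (-1 : ℝ) 1) :
    t ^ 2 ≤ (1 + t) * log (1 + t) + (1 - t) * log (1 - t) := by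
  set g : ℝ → ℝ := fun t => (1 + t) * log (1 + t) + (1 - t) * log (1 - t) - t ^ 2
  have hconv : ConvexOn ℝ (Set.Icc (-1) 1) g := by
    refine convexOn_of_hasDerivWithinAt2_nonneg (convex_Icc _ _)
      (f' := fun t => log (1 + t) - log (1 - t) - 2 * t)
      (f'' := fun t => 1 / (1 + t) + 1 / (1 - t) - 2) ?_ ?_ ?_ ?_
    · have := continuous_mul_log
      exact (by fun_prop : Continuous g).continuousOn
    all_goals simp only [interior_Icc, Set.mem_Ioo]
    · rintro x ⟨hx₁, hx₂⟩
      have h₁ : 1 + x ≠ 0 := by linarith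
      have h₂ : 1 - x ≠ 0 := by linarith
      have := ((((hasDerivAt_id x).const_add 1).mul (((hasDerivAt_id x).const_add 1).log h₁)).add
        (((hasDerivAt_id x).const_sub 1).mul (((hasDerivAt_id x).const_sub 1).log h₂))).sub
        ((hasDerivAt_id x).pow 2)
      refine (this.congr_deriv ?_).hasDerivWithinAt
      simp only [id, one_mul, mul_one, Nat.cast_ofNat]
      field_simp
      ring
    · rintro x ⟨hx₁, hx₂⟩
      have h₁ : 1 + x ≠ 0 := by linarith
      have h₂ : 1 - x ≠ 0 := by linarith
      have := ((((hasDerivAt_id x).const_add 1).log h₁).sub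
        (((hasDerivAt_id x).const_sub 1).log h₂)).sub ((hasDerivAt_id x).const_mul 2)
      refine (this.congr_deriv ?_).hasDerivWithinAt
      simp only [id, mul_one]
      ring
    · rintro x ⟨hx₁, hx₂⟩
      have h₁ : 0 < 1 + x := by linarith
      have h₂ : 0 < 1 - x := by linarith
      have : 1 / (1 + x) + 1 / (1 - x) - 2 = 2 * x ^ 2 / ((1 + x) * (1 - x)) := by
        field_simp; ring
      rw [this]; positivity
  have hneg : -t ∈ Set.Icc (-1 : ℝ) 1 := ⟨by linarith [ht.2], by linarith [ht.1]⟩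
  have hg0 : g 0 = 0 := by simp [g]
  have heven : g (-t) = g t := by simp only [g]; ring_nf
  have hmid := hconv.2 ht hneg (by norm_num : (0 : ℝ) ≤ 1 / 2) (by norm_num : (0 : ℝ) ≤ 1 / 2)
    (by norm_num)
  rw [smul_eq_mul, smul_eq_mul, smul_eq_mul, smul_eq_mul, heven] at hmid
  have : 0 ≤ g t := by
    calc 0 = g 0 := hg0.symm
      _ = g (1 / 2 * t + 1 / 2 * -t) := by ring_nf
      _ ≤ 1 / 2 * g t + 1 / 2 * g t := hmid
      _ = g t := by ring
  simp only [g] at this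
  linarith

lemma sq_sub_div_add_le_mul_log {a b : ℝ} (ha : 0 ≤ a) (hb : 0 ≤ b) :
    (a - b) ^ 2 / (a + b) ≤
      2 * (a * log (a / ((a + b) / 2)) + b * log (b / ((a + b) / 2))) := by
  rcases (add_nonneg ha hb).eq_or_lt with hs | hs
  · obtain ⟨rfl, rfl⟩ : a = 0 ∧ b = 0 := ⟨by linarith, by linarith⟩
    simp
  set t := (a - b) / (a + b)
  have ht : t ∈ Set.Icc (-1 : ℝ) 1 := by
    constructor <;> [rw [le_div_iff₀ hs]; rw [div_le_iff₀ hs]] <;> linarith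
  have h₁ : a / ((a + b) / 2) = 1 + t := by simp only [t]; field_simp; ring
  have h₂ : b / ((a + b) / 2) = 1 - t := by simp only [t]; field_simp; ring
  have hmix : a * log (1 + t) + b * log (1 - t)
      = (a + b) / 2 * ((1 + t) * log (1 + t) + (1 - t) * log (1 - t)) := by
    simp only [t]; field_simp; ring
  have hsq : (a - b) ^ 2 / (a + b) = (a + b) * t ^ 2 := by
    simp only [t]; field_simp
  rw [h₁, h₂, hmix, hsq]
  nlinarith [sq_le_one_add_mul_log_add_one_sub_mul_log ht]

lemma mul_abs_sub_le_mul_log_add {a b : ℝ} (ha : 0 ≤ a) (hb : 0 ≤ b) (c : ℝ) :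
    c * |a - b| ≤
      2 * (a * log (a / ((a + b) / 2)) + b * log (b / ((a + b) / 2))) + c ^ 2 * (a + b) / 4 := by
  suffices c * |a - b| ≤ (a - b) ^ 2 / (a + b) + c ^ 2 * (a + b) / 4 by
    linarith [sq_sub_div_add_le_mul_log ha hb]
  rcases (add_nonneg ha hb).eq_or_lt with hs | hs
  · obtain ⟨rfl, rfl⟩ : a = 0 ∧ b = 0 := ⟨by linarith, by linarith⟩
    simp
  have : c * |a - b| - c ^ 2 * (a + b) / 4 ≤ (a - b) ^ 2 / (a + b) := by
    rw [le_div_iff₀ hs]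
    nlinarith [sq_nonneg (|a - b| - c * (a + b) / 2), sq_abs (a - b)]
  linarith

lemma abs_mul_log_div_le {a b : ℝ} (ha : 0 ≤ a) (hab : a ≤ 2 * b) :
    |a * log (a / b)| ≤ 2 * b := by
  rcases ha.eq_or_lt with rfl | ha
  · simpa using hab
  have hb : 0 < b := by linarith
  have hx : 0 < a / b := div_pos ha hb
  have hlow : a - b ≤ a * log (a / b) := by
    have := mul_le_mul_of_nonneg_left (one_sub_inv_le_log_of_pos hx) ha.le
    rwa [inv_div, mul_sub, mul_one, mul_div_cancel₀ _ ha.ne'] at this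
  have hup : a * log (a / b) ≤ a := by
    have : log (a / b) ≤ 1 := (log_le_sub_one_of_pos hx).trans (by
      rw [sub_le_iff_le_add, div_le_iff₀ hb]; linarith)
    nlinarith
  rw [abs_le]; constructor <;> linarith

end Real

open Real

section
variable {Ω : Type*} [MeasurableSpace Ω] {μ : Measure Ω}

lemma integrable_coe_of_lintegral_ne_top {p : Ω → ℝ≥0} (hp : Measurable p)
    (h : ∫⁻ ω, (p ω : ℝ≥0∞) ∂μ ≠ ∞) : Integrable (fun ω => (p ω : ℝ)) μ :=
  ⟨hp.coe_nnreal_real.aestronglyMeasurable, hasFiniteIntegral_iff_ofNNReal.2 h.lt_top⟩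

lemma integral_coe_eq_one_of_lintegral_eq_one {p : Ω → ℝ≥0} (hp : Measurable p)
    (h : ∫⁻ ω, (p ω : ℝ≥0∞) ∂μ = 1) : ∫ ω, (p ω : ℝ) ∂μ = 1 := by
  have := lintegral_coe_eq_integral p
    (integrable_coe_of_lintegral_ne_top (μ := μ) hp (by simp [h]))
  rwa [h, eq_comm, ENNReal.ofReal_eq_one] at this

lemma integrable_mul_log_div_of_le_two_mul {p q : Ω → ℝ} (hp : Measurable p) (hq : Measurable q)
    (hp0 : ∀ ω, 0 ≤ p ω) (hpq : ∀ ω, p ω ≤ 2 * q ω) (hqi : Integrable q μ) :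
    Integrable (fun ω => p ω * log (p ω / q ω)) μ :=
  (hqi.const_mul 2).mono' (hp.mul (hp.div hq).log).aestronglyMeasurable
    (.of_forall fun ω => abs_mul_log_div_le (hp0 ω) (hpq ω))

lemma klDiv_withDensity {p q : Ω → ℝ≥0} (hp : Measurable p) (hq : Measurable q)
    [SigmaFinite (μ.withDensity fun ω => (q ω : ℝ≥0∞))] (hpq : ∀ ω, q ω = 0 → p ω = 0)
    (hint : Integrable (fun ω => (p ω : ℝ) * log (p ω / q ω)) μ) :
    klDiv (μ.withDensity fun ω => (p ω : ℝ≥0∞)) (μ.withDensity fun ω => (q ω : ℝ≥0∞))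
      = ENNReal.ofReal (∫ ω, (p ω : ℝ) * log (p ω / q ω) ∂μ) := by
  set P := μ.withDensity fun ω => (p ω : ℝ≥0∞)
  set Q := μ.withDensity fun ω => (q ω : ℝ≥0∞)
  have hratio : Measurable fun ω => (p ω : ℝ≥0∞) / q ω :=
    hp.coe_nnreal_ennreal.div hq.coe_nnreal_ennreal
  have hPQ : Q.withDensity (fun ω => (p ω : ℝ≥0∞) / q ω) = P := by
    rw [← withDensity_mul μ hq.coe_nnreal_ennreal hratio]
    congr 1
    funext ω
    by_cases h0 : q ω = 0
    · simp [h0, hpq ω h0]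
    · exact ENNReal.mul_div_cancel (by simpa using h0) ENNReal.coe_ne_top
  have hac : P ≪ Q := hPQ ▸ withDensity_absolutelyContinuous Q _
  have hllr : llr P Q =ᵐ[P] fun ω => log (p ω / q ω) := by
    have hrn := hPQ ▸ Measure.rnDeriv_withDensity Q hratio
    filter_upwards [hac.ae_le hrn] with ω hω
    simp [llr_def, hω]
  have hint' : Integrable (fun ω => log (p ω / q ω)) P := by
    rw [integrable_withDensity_iff_integrable_smul hp]
    simpa [NNReal.smul_def] using hint
  have hI : ∫ ω, llr P Q ω ∂P = ∫ ω, (p ω : ℝ) * log (p ω / q ω) ∂μ := by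
    rw [integral_congr_ae hllr, integral_withDensity_eq_integral_smul hp]
    simp [NNReal.smul_def]
  rw [klDiv, if_pos ⟨hac, (integrable_congr hllr).2 hint'⟩, hI]

lemma inv_two_smul_withDensity_add {p : Ω → ℝ≥0} (hp : Measurable p) (q : Ω → ℝ≥0) :
    (2 : ℝ≥0∞)⁻¹ • (μ.withDensity (fun ω => (p ω : ℝ≥0∞)) + μ.withDensity fun ω => (q ω : ℝ≥0∞))
      = μ.withDensity fun ω => (((p ω + q ω) / 2 : ℝ≥0) : ℝ≥0∞) := by
  rw [← withDensity_add_left hp.coe_nnreal_ennreal, ← withDensity_smul' _ _ (by simp)]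
  congr 1
  funext ω
  simp [ENNReal.div_eq_inv_mul]

lemma sq_integral_abs_sub_le_integral_mul_log {p q : Ω → ℝ} (hp : Measurable p)
    (hq : Measurable q) (hp0 : ∀ ω, 0 ≤ p ω) (hq0 : ∀ ω, 0 ≤ q ω) (hpi : Integrable p μ)
    (hqi : Integrable q μ) (hp1 : ∫ ω, p ω ∂μ = 1) (hq1 : ∫ ω, q ω ∂μ = 1) :
    (∫ ω, |p ω - q ω| ∂μ) ^ 2 ≤
      4 * (∫ ω, p ω * log (p ω / ((p ω + q ω) / 2)) ∂μ
        + ∫ ω, q ω * log (q ω / ((p ω + q ω) / 2)) ∂μ) := by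
  set x := ∫ ω, |p ω - q ω| ∂μ
  have hmi : Integrable (fun ω => (p ω + q ω) / 2) μ := (hpi.add hqi).div_const 2
  have hmm : Measurable fun ω => (p ω + q ω) / 2 := (hp.add hq).div_const 2
  have hpl := integrable_mul_log_div_of_le_two_mul hp hmm hp0 (fun ω => by linarith [hq0 ω]) hmi
  have hql := integrable_mul_log_div_of_le_two_mul hq hmm hq0 (fun ω => by linarith [hp0 ω]) hmi
  have hLi : Integrable (fun ω => x * |p ω - q ω|) μ := (hpi.sub hqi).abs.const_mul x
  have hKi : Integrable (fun ω => 2 * (p ω * log (p ω / ((p ω + q ω) / 2))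
      + q ω * log (q ω / ((p ω + q ω) / 2)))) μ := (hpl.add hql).const_mul 2
  have hMi : Integrable (fun ω => x ^ 2 * (p ω + q ω) / 4) μ :=
    ((hpi.add hqi).const_mul _).div_const 4
  have h := integral_mono hLi (hKi.add hMi) fun ω =>
    mul_abs_sub_le_mul_log_add (hp0 ω) (hq0 ω) x
  simp only [Pi.add_apply] at h
  rw [integral_const_mul, integral_add hKi hMi, integral_const_mul, integral_add hpl hql,
    integral_div, integral_const_mul, integral_add hpi hqi, hp1, hq1] at h
  nlinarith

lemma integral_abs_sub_div_two_le_sqrt_jsDiv {p q : Ω → ℝ≥0} (hp : Measurable p)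
    (hq : Measurable q) (hp1 : ∫⁻ ω, (p ω : ℝ≥0∞) ∂μ = 1) (hq1 : ∫⁻ ω, (q ω : ℝ≥0∞) ∂μ = 1) :
    (∫ ω, |(p ω : ℝ) - q ω| ∂μ) / 2 ≤
      √(2 * (jsDiv (μ.withDensity fun ω => (p ω : ℝ≥0∞))
        (μ.withDensity fun ω => (q ω : ℝ≥0∞))).toReal) := by
  set P := μ.withDensity fun ω => (p ω : ℝ≥0∞)
  set Q := μ.withDensity fun ω => (q ω : ℝ≥0∞)
  have : IsFiniteMeasure P := isFiniteMeasure_withDensity (by simp [hp1])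
  have : IsFiniteMeasure Q := isFiniteMeasure_withDensity (by simp [hq1])
  have hpi := integrable_coe_of_lintegral_ne_top (μ := μ) hp (by simp [hp1])
  have hqi := integrable_coe_of_lintegral_ne_top (μ := μ) hq (by simp [hq1])
  set m : Ω → ℝ≥0 := fun ω => (p ω + q ω) / 2
  have hm : Measurable m := (hp.add hq).div_const 2
  have hmR : ∀ ω, (m ω : ℝ) = ((p ω : ℝ) + q ω) / 2 := fun ω => by simp [m]
  have hmi : Integrable (fun ω => (m ω : ℝ)) μ :=
    ((hpi.add hqi).div_const 2).congr (.of_forall fun ω => (hmR ω).symm)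
  have hM : (2 : ℝ≥0∞)⁻¹ • (P + Q) = μ.withDensity fun ω => (m ω : ℝ≥0∞) :=
    inv_two_smul_withDensity_add hp q
  have : IsFiniteMeasure (μ.withDensity fun ω => (m ω : ℝ≥0∞)) := ⟨by
    rw [← hM, Measure.smul_apply, Measure.add_apply, smul_eq_mul]
    exact ENNReal.mul_lt_top (by simp)
      (ENNReal.add_lt_top.2 ⟨measure_lt_top _ _, measure_lt_top _ _⟩)⟩
  have hKL (f : Ω → ℝ≥0) (hf : Measurable f) (hfm : ∀ ω, f ω ≤ 2 * m ω) :
      klDiv (μ.withDensity fun ω => (f ω : ℝ≥0∞)) ((2 : ℝ≥0∞)⁻¹ • (P + Q))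
        = ENNReal.ofReal (∫ ω, (f ω : ℝ) * log (f ω / m ω) ∂μ) := by
    rw [hM]
    refine klDiv_withDensity hf hm (fun ω h => by simpa [h] using hfm ω) ?_
    exact integrable_mul_log_div_of_le_two_mul hf.coe_nnreal_real hm.coe_nnreal_real
      (fun ω => (f ω).coe_nonneg) (fun ω => by exact_mod_cast hfm ω) hmi
  have hjs : jsDiv P Q = ENNReal.ofReal (∫ ω, (p ω : ℝ) * log (p ω / ((p ω + q ω) / 2)) ∂μ) / 2
      + ENNReal.ofReal (∫ ω, (q ω : ℝ) * log (q ω / ((p ω + q ω) / 2)) ∂μ) / 2 := by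
    rw [jsDiv, hKL p hp fun ω => by simp [m, mul_div_cancel₀],
      hKL q hq fun ω => by simp [m, mul_div_cancel₀]]
    simp only [hmR]
  have hK := sq_integral_abs_sub_le_integral_mul_log hp.coe_nnreal_real hq.coe_nnreal_real
    (fun ω => (p ω).coe_nonneg) (fun ω => (q ω).coe_nonneg) hpi hqi
    (integral_coe_eq_one_of_lintegral_eq_one hp hp1)
    (integral_coe_eq_one_of_lintegral_eq_one hq hq1)
  -- `toReal ∘ ofReal` is `max · 0`; the lower bound `K ≤ max K 0` suffices, so Gibbs'
  -- inequality `0 ≤ K` is never needed.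
  rw [hjs, ENNReal.toReal_add (by finiteness) (by finiteness), ENNReal.toReal_div,
    ENNReal.toReal_div, ENNReal.toReal_ofReal', ENNReal.toReal_ofReal', ENNReal.toReal_ofNat]
  refine Real.le_sqrt_of_sq_le ?_
  nlinarith [le_max_left (∫ ω, (p ω : ℝ) * log (p ω / ((p ω + q ω) / 2)) ∂μ) 0,
    le_max_left (∫ ω, (q ω : ℝ) * log (q ω / ((p ω + q ω) / 2)) ∂μ) 0]

lemma integral_mul_sub_integral_mul_le {p q φ : Ω → ℝ} {C : ℝ} (hp : Integrable p μ)
    (hq : Integrable q μ) (hpq : ∫ ω, p ω ∂μ = ∫ ω, q ω ∂μ) (hφ : AEStronglyMeasurable φ μ)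
    (hφ0 : ∀ ω, 0 ≤ φ ω) (hφC : ∀ ω, φ ω ≤ C) :
    ∫ ω, p ω * φ ω ∂μ - ∫ ω, q ω * φ ω ∂μ ≤ C * ((∫ ω, |p ω - q ω| ∂μ) / 2) := by
  have hbdd : ∀ᵐ ω ∂μ, ‖φ ω‖ ≤ C :=
    .of_forall fun ω => (Real.norm_of_nonneg (hφ0 ω)).trans_le (hφC ω)
  have hpφ := hp.mul_bdd hφ hbdd
  have hqφ := hq.mul_bdd hφ hbdd
  have hd : Integrable (fun ω => p ω - q ω) μ := hp.sub hq
  have hpt : ∀ ω, p ω * φ ω - q ω * φ ω ≤ C * ((|p ω - q ω| + (p ω - q ω)) / 2) := by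
    intro ω
    rcases le_total (q ω) (p ω) with h | h
    · rw [abs_of_nonneg (sub_nonneg.2 h)]; nlinarith [hφC ω]
    · rw [abs_of_nonpos (sub_nonpos.2 h)]; nlinarith [hφ0 ω]
  calc ∫ ω, p ω * φ ω ∂μ - ∫ ω, q ω * φ ω ∂μ = ∫ ω, (p ω * φ ω - q ω * φ ω) ∂μ :=
        (integral_sub hpφ hqφ).symm
    _ ≤ ∫ ω, C * ((|p ω - q ω| + (p ω - q ω)) / 2) ∂μ :=
        integral_mono (hpφ.sub hqφ) (((hd.abs.add hd).div_const 2).const_mul C) hpt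
    _ = C * ((∫ ω, |p ω - q ω| ∂μ) / 2) := by
        rw [integral_const_mul, integral_div, integral_add hd.abs hd,
          integral_sub hp hq, hpq, sub_self, add_zero]

end

theorem target_loss_le_source_loss_add_js_general
    {Ω : Type*} [MeasurableSpace Ω] (μ : Measure Ω)
    (ps pt psub : Ω → ℝ≥0)
    (hpt : Measurable pt) (hpsub : Measurable psub)
    (hpt1 : ∫⁻ ω, (pt ω : ℝ≥0∞) ∂μ = 1)
    (hpsub1 : ∫⁻ ω, (psub ω : ℝ≥0∞) ∂μ = 1)
    (φ : Ω → ℝ) (hφ : Measurable φ)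
    (C : ℝ) (hC : 0 ≤ C) (hφ0 : ∀ ω, 0 ≤ φ ω) (hφC : ∀ ω, φ ω ≤ C)
    (hsub : ∫ ω, (psub ω : ℝ) * φ ω ∂μ ≤ ∫ ω, (ps ω : ℝ) * φ ω ∂μ) :
    ∫ ω, (pt ω : ℝ) * φ ω ∂μ
      ≤ ∫ ω, (ps ω : ℝ) * φ ω ∂μ
        + C * Real.sqrt (2 * (jsDiv (μ.withDensity (fun ω => (pt ω : ℝ≥0∞)))
            (μ.withDensity (fun ω => (psub ω : ℝ≥0∞)))).toReal) := by
  have hmass : ∫ ω, (pt ω : ℝ) ∂μ = ∫ ω, (psub ω : ℝ) ∂μ := by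
    rw [integral_coe_eq_one_of_lintegral_eq_one hpt hpt1,
      integral_coe_eq_one_of_lintegral_eq_one hpsub hpsub1]
  have hgap := integral_mul_sub_integral_mul_le
    (integrable_coe_of_lintegral_ne_top hpt (by simp [hpt1]))
    (integrable_coe_of_lintegral_ne_top hpsub (by simp [hpsub1])) hmass hφ.aestronglyMeasurable
    hφ0 hφC
  have htv := integral_abs_sub_div_two_le_sqrt_jsDiv hpt hpsub hpt1 hpsub1
  calc ∫ ω, (pt ω : ℝ) * φ ω ∂μ
      = ∫ ω, (psub ω : ℝ) * φ ω ∂μ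
        + (∫ ω, (pt ω : ℝ) * φ ω ∂μ - ∫ ω, (psub ω : ℝ) * φ ω ∂μ) := by ring
    _ ≤ _ := add_le_add hsub (hgap.trans (mul_le_mul_of_nonneg_left htv hC))

/-- **Core inequality of Theorem 1 (RAIN paper).** Let `p_s, p_t, p_sub` be measurable
probability densities on `(Ω, μ)` and let `φ : Ω → ℝ` (standing for `−log p̂`) be
measurable with `0 ≤ φ ≤ C` (Assumption 1). If `∫ p_sub·φ dμ ≤ ∫ p_s·φ dμ`
(Assumption 2: the target subnetwork is superior to the source network), then
`∫ p_t·φ dμ ≤ ∫ p_s·φ dμ + C·√(2·D_JS(p_t·μ ‖ p_sub·μ))`. -/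
theorem target_loss_le_source_loss_add_js
    {Ω : Type*} [MeasurableSpace Ω] (μ : Measure Ω)
    (ps pt psub : Ω → ℝ≥0)
    (hps : Measurable ps) (hpt : Measurable pt) (hpsub : Measurable psub)
    (hps1 : ∫⁻ ω, (ps ω : ℝ≥0∞) ∂μ = 1)
    (hpt1 : ∫⁻ ω, (pt ω : ℝ≥0∞) ∂μ = 1)
    (hpsub1 : ∫⁻ ω, (psub ω : ℝ≥0∞) ∂μ = 1)
    (φ : Ω → ℝ) (hφ : Measurable φ)
    (C : ℝ) (hC : 0 ≤ C) (hφ0 : ∀ ω, 0 ≤ φ ω) (hφC : ∀ ω, φ ω ≤ C)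
    (hsub : ∫ ω, (psub ω : ℝ) * φ ω ∂μ ≤ ∫ ω, (ps ω : ℝ) * φ ω ∂μ) :
    ∫ ω, (pt ω : ℝ) * φ ω ∂μ
      ≤ ∫ ω, (ps ω : ℝ) * φ ω ∂μ
        + C * Real.sqrt (2 * (jsDiv (μ.withDensity (fun ω => (pt ω : ℝ≥0∞)))
            (μ.withDensity (fun ω => (psub ω : ℝ≥0∞)))).toReal) :=
  target_loss_le_source_loss_add_js_general μ ps pt psub hpt hpsub hpt1 hpsub1 φ hφ C hC hφ0 hφC
    hsub
end

section
/- Let X, Y, Z be measurable spaces, ν_s and ν_t probability measures on X × Y (source and target data–label distributions), κ a Markov kernel from X to Z, and p̂ : Y × Z → (0,1] measurable with −log p̂(y,z) ≤ C for all (y,z) (Assumption 1). Let π_s and π_t be the joint distributions of (y,z) on Y × Z induced by (x,y) ∼ ν_s (resp. ν_t) and z ∼ κ_x, and let π_sub be a probability measure on Y × Z (the subnetwork's joint label–representation distribution) satisfying ∫ log p̂ dπ_s ≤ ∫ log p̂ dπ_sub (Assumption 2). Then the target loss l_t = E_{(x,y)∼ν_t}[ −log ∫_Z p̂(y,z) dκ_x(z)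 ] satisfies l_t ≤ ∫ (−log p̂) dπ_s + C·√(2·D_JS(π_t ‖ π_sub)). (Paper's Theorem 1: the target loss is bounded by the source loss plus the JS-divergence term between the full target network's and the subnetwork's joint distributions.) -/
open MeasureTheory ProbabilityTheory
open scoped NNReal ENNReal Classical

private lemma auxG_nonneg : ∀ x ∈ Set.Ico (0:ℝ) 1,
    0 ≤ Real.log (1+x) - Real.log (1-x) - 2*x := by
  have hmono : MonotoneOn (fun s : ℝ => Real.log (1+s) - Real.log (1-s) - 2*s)
      (Set.Ico (0:ℝ) 1) := by
    have hd : ∀ x ∈ Set.Ico (0:ℝ) 1, HasDerivAt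
        (fun s : ℝ => Real.log (1+s) - Real.log (1-s) - 2*s)
        (1/(1+x) + 1/(1-x) - 2) x := by
      intro x hx
      have h1 : (1:ℝ) + x ≠ 0 := by nlinarith [hx.1, hx.2]
      have h2 : (1:ℝ) - x ≠ 0 := by nlinarith [hx.1, hx.2]
      have d1 : HasDerivAt (fun s : ℝ => Real.log (1+s)) (1/(1+x)) x := by
        have := (Real.hasDerivAt_log h1).comp x ((hasDerivAt_id x).const_add 1)
        simpa [one_div, Function.comp_def] using this
      have d2 : HasDerivAt (fun s : ℝ => Real.log (1-s)) (-(1/(1-x))) x := by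
        have hi : HasDerivAt (fun s : ℝ => 1 - s) (-1) x := by
          simpa using (hasDerivAt_id' x).const_sub 1
        have := (Real.hasDerivAt_log h2).comp x hi
        simpa [one_div, Function.comp_def] using this
      have d3 : HasDerivAt (fun s : ℝ => 2*s) 2 x := by
        simpa using (hasDerivAt_id x).const_mul 2
      have := (d1.sub d2).sub d3
      exact this.congr_deriv (by ring)
    apply monotoneOn_of_deriv_nonneg (convex_Ico 0 1)
    · intro x hx
      exact (hd x hx).continuousAt.continuousWithinAt
    · intro x hx
      rw [interior_Ico] at hx
      exact ((hd x ⟨le_of_lt hx.1, hx.2⟩).differentiableAt).differentiableWithinAt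
    · intro x hx
      rw [interior_Ico] at hx
      have hx' : x ∈ Set.Ico (0:ℝ) 1 := ⟨le_of_lt hx.1, hx.2⟩
      rw [(hd x hx').deriv]
      have h1 : (0:ℝ) < 1 + x := by linarith [hx.1]
      have h2 : (0:ℝ) < 1 - x := by linarith [hx.2]
      have : 1/(1+x) + 1/(1-x) - 2 = 2*x^2/((1+x)*(1-x)) := by
        field_simp; ring
      rw [this]; positivity
  intro x hx
  have h0 : (0:ℝ) ∈ Set.Ico (0:ℝ) 1 := by constructor <;> norm_num
  have := hmono h0 hx hx.1
  simpa using this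

private lemma auxF_nonneg : ∀ s ∈ Set.Icc (0:ℝ) 1,
    s^2 ≤ (1+s) * Real.log (1+s) + (1-s) * Real.log (1-s) := by
  have hmono : MonotoneOn
      (fun s : ℝ => (1+s) * Real.log (1+s) + (1-s) * Real.log (1-s) - s^2)
      (Set.Icc (0:ℝ) 1) := by
    have hd : ∀ x ∈ Set.Ioo (0:ℝ) 1, HasDerivAt
        (fun s : ℝ => (1+s) * Real.log (1+s) + (1-s) * Real.log (1-s) - s^2)
        (Real.log (1+x) - Real.log (1-x) - 2*x) x := by
      intro x hx
      have h1 : (1:ℝ) + x ≠ 0 := by nlinarith [hx.1, hx.2]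
      have h2 : (1:ℝ) - x ≠ 0 := by nlinarith [hx.1, hx.2]
      have d1 : HasDerivAt (fun s : ℝ => (1+s) * Real.log (1+s)) (Real.log (1+x) + 1) x := by
        have hi : HasDerivAt (fun s : ℝ => 1 + s) 1 x := (hasDerivAt_id x).const_add 1
        have := (Real.hasDerivAt_mul_log h1).comp x hi
        simpa [Function.comp_def] using this
      have d2 : HasDerivAt (fun s : ℝ => (1-s) * Real.log (1-s)) (-(Real.log (1-x) + 1)) x := by
        have hi : HasDerivAt (fun s : ℝ => 1 - s) (-1) x := by
          simpa using (hasDerivAt_id' x).const_sub 1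
        have := (Real.hasDerivAt_mul_log h2).comp x hi
        simpa [Function.comp_def] using this
      have d3 : HasDerivAt (fun s : ℝ => s^2) (2*x) x := by
        simpa using (hasDerivAt_pow 2 x)
      have := (d1.add d2).sub d3
      exact this.congr_deriv (by ring)
    apply monotoneOn_of_deriv_nonneg (convex_Icc 0 1)
    · apply ContinuousOn.sub
      · apply ContinuousOn.add
        · exact (Real.continuous_mul_log.comp (continuous_const.add continuous_id)).continuousOn
        · exact (Real.continuous_mul_log.comp (continuous_const.sub continuous_id)).continuousOn
      · exact (continuous_pow 2).continuousOn
    · intro x hx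
      rw [interior_Icc] at hx
      exact ((hd x hx).differentiableAt).differentiableWithinAt
    · intro x hx
      rw [interior_Icc] at hx
      rw [(hd x hx).deriv]
      exact auxG_nonneg x ⟨le_of_lt hx.1, hx.2⟩
  intro s hs
  have h0 : (0:ℝ) ∈ Set.Icc (0:ℝ) 1 := by constructor <;> norm_num
  have := hmono h0 hs hs.1
  simp only [add_zero, sub_zero, Real.log_one, mul_one] at this
  nlinarith [this]

/-- Binary Pinsker-type pointwise inequality. -/
lemma sq_le_entropy_sum (s : ℝ) (hs : s ∈ Set.Icc (-1:ℝ) 1) :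
    s^2 ≤ (1+s) * Real.log (1+s) + (1-s) * Real.log (1-s) := by
  rcases le_total 0 s with h | h
  · exact auxF_nonneg s ⟨h, hs.2⟩
  · have := auxF_nonneg (-s) ⟨by linarith, by linarith [hs.1]⟩
    rw [show (1:ℝ) + -s = 1 - s from by ring, show (1:ℝ) - -s = 1 + s from by ring] at this
    nlinarith [this]

lemma abs_mul_log_le_two {x : ℝ} (h0 : 0 ≤ x) (h2 : x ≤ 2) : |x * Real.log x| ≤ 2 := by
  rcases eq_or_lt_of_le h0 with h | hx0
  · simp [← h]
  rcases le_total x 1 with h1 | h1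
  · have hlog : Real.log x ≤ 0 := Real.log_nonpos (le_of_lt hx0) h1
    have hinv : Real.log x⁻¹ ≤ x⁻¹ - 1 := Real.log_le_sub_one_of_pos (by positivity)
    rw [Real.log_inv] at hinv
    have hxl : x * (-Real.log x) ≤ x * (x⁻¹ - 1) :=
      mul_le_mul_of_nonneg_left (by linarith) h0
    have : x * (x⁻¹ - 1) = 1 - x := by field_simp
    rw [abs_of_nonpos (mul_nonpos_of_nonneg_of_nonpos h0 hlog)]
    nlinarith
  · have hlog0 : 0 ≤ Real.log x := Real.log_nonneg h1
    have hlog : Real.log x ≤ x - 1 := Real.log_le_sub_one_of_pos hx0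
    rw [abs_of_nonneg (mul_nonneg h0 hlog0)]
    nlinarith

lemma sub_one_le_mul_log {x : ℝ} (h0 : 0 ≤ x) : x - 1 ≤ x * Real.log x := by
  rcases eq_or_lt_of_le h0 with h | hx0
  · simp [← h]
  have hinv : Real.log x⁻¹ ≤ x⁻¹ - 1 := Real.log_le_sub_one_of_pos (by positivity)
  rw [Real.log_inv] at hinv
  have := mul_le_mul_of_nonneg_left hinv h0
  have hx : x * (x⁻¹ - 1) = 1 - x := by field_simp
  nlinarith

lemma pinsker_js {Ω : Type*} [MeasurableSpace Ω]
    (P Q : Measure Ω) [IsProbabilityMeasure P] [IsProbabilityMeasure Q]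
    (f : Ω → ℝ) (hf : Measurable f) (C : ℝ)
    (h0 : ∀ x, 0 ≤ f x) (hfC : ∀ x, f x ≤ C) :
    ∫ x, f x ∂P - ∫ x, f x ∂Q ≤ C * Real.sqrt (2 * (jsDiv P Q).toReal) := by
  have hne : Nonempty Ω := by
    by_contra h
    rw [not_nonempty_iff] at h
    have h1 := measure_univ (μ := P)
    rw [Set.univ_eq_empty_iff.mpr h] at h1
    simp at h1
  have hC0 : 0 ≤ C := (h0 (Classical.choice hne)).trans (hfC _)
  set M : Measure Ω := (2 : ℝ≥0∞)⁻¹ • (P + Q) with hM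
  have hMuniv : M Set.univ = 1 := by
    rw [hM, Measure.smul_apply, Measure.add_apply, measure_univ, measure_univ, smul_eq_mul,
      one_add_one_eq_two, ENNReal.inv_mul_cancel (by norm_num) (by norm_num)]
  haveI : IsProbabilityMeasure M := ⟨hMuniv⟩
  have hPQM : P + Q = (2 : ℝ≥0∞) • M := by
    rw [hM, smul_smul, ENNReal.mul_inv_cancel (by norm_num) (by norm_num), one_smul]
  have hPM : P ≪ M := by
    refine Measure.AbsolutelyContinuous.mk fun s hs h0s => ?_
    have : (P + Q) s = 0 := by
      rw [hPQM, Measure.smul_apply, h0s, smul_eq_mul, mul_zero]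
    rw [Measure.add_apply] at this
    exact (add_eq_zero.mp this).1
  have hQM : Q ≪ M := by
    refine Measure.AbsolutelyContinuous.mk fun s hs h0s => ?_
    have : (P + Q) s = 0 := by
      rw [hPQM, Measure.smul_apply, h0s, smul_eq_mul, mul_zero]
    rw [Measure.add_apply] at this
    exact (add_eq_zero.mp this).2
  set g : Ω → ℝ := fun x => (P.rnDeriv M x).toReal with hg
  set gQ : Ω → ℝ := fun x => (Q.rnDeriv M x).toReal with hgQ
  have hgmeas : Measurable g := (Measure.measurable_rnDeriv P M).ennreal_toReal
  have hgQmeas : Measurable gQ := (Measure.measurable_rnDeriv Q M).ennreal_toReal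
  -- a.e. facts
  have hsum : ∀ᵐ x ∂M, P.rnDeriv M x + Q.rnDeriv M x = 2 := by
    have h1 : (P + Q).rnDeriv M =ᵐ[M] P.rnDeriv M + Q.rnDeriv M :=
      Measure.rnDeriv_add P Q M
    have h2 : ((2 : ℝ≥0∞) • M).rnDeriv M =ᵐ[M] (2 : ℝ≥0∞) • M.rnDeriv M :=
      Measure.rnDeriv_smul_left_of_ne_top M M (by norm_num)
    have h3 : M.rnDeriv M =ᵐ[M] fun _ => 1 := Measure.rnDeriv_self M
    filter_upwards [h1, h2, h3] with x hx1 hx2 hx3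
    have : (P + Q).rnDeriv M x = ((2 : ℝ≥0∞) • M).rnDeriv M x := by rw [hPQM]
    rw [hx1] at this
    rw [hx2] at this
    simp only [Pi.add_apply, Pi.smul_apply, hx3, smul_eq_mul, mul_one] at this ⊢
    exact this
  have hae : ∀ᵐ x ∂M, g x + gQ x = 2 ∧ 0 ≤ g x ∧ g x ≤ 2 ∧ 0 ≤ gQ x ∧ gQ x ≤ 2 := by
    filter_upwards [hsum, Measure.rnDeriv_lt_top P M, Measure.rnDeriv_lt_top Q M]
      with x hx hP hQ
    have hPne : P.rnDeriv M x ≠ ⊤ := hP.ne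
    have hQne : Q.rnDeriv M x ≠ ⊤ := hQ.ne
    have hPle : P.rnDeriv M x ≤ 2 := hx ▸ le_self_add
    have hQle : Q.rnDeriv M x ≤ 2 := hx ▸ le_add_self
    have hadd : g x + gQ x = 2 := by
      rw [hg, hgQ]
      simp only
      rw [← ENNReal.toReal_add hPne hQne, hx]
      norm_num
    refine ⟨hadd, ENNReal.toReal_nonneg, ?_, ENNReal.toReal_nonneg, ?_⟩
    · simpa using ENNReal.toReal_le_toReal hPne (by norm_num) |>.mpr hPle
    · simpa using ENNReal.toReal_le_toReal hQne (by norm_num) |>.mpr hQle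
  -- integrability of g log g etc.
  have hIg : Integrable g M := Measure.integrable_toReal_rnDeriv
  have hIgQ : Integrable gQ M := Measure.integrable_toReal_rnDeriv
  have hIgl : Integrable (fun x => g x * Real.log (g x)) M := by
    refine Integrable.mono' (integrable_const 2)
      ((hgmeas.mul (Real.measurable_log.comp hgmeas)).aestronglyMeasurable) ?_
    filter_upwards [hae] with x hx
    exact abs_mul_log_le_two hx.2.1 hx.2.2.1
  have hIgQl : Integrable (fun x => gQ x * Real.log (gQ x)) M := by
    refine Integrable.mono' (integrable_const 2)
      ((hgQmeas.mul (Real.measurable_log.comp hgQmeas)).aestronglyMeasurable) ?_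
    filter_upwards [hae] with x hx
    exact abs_mul_log_le_two hx.2.2.2.1 hx.2.2.2.2
  have hintg : ∫ x, g x ∂M = 1 := by
    rw [hg]
    simp only
    rw [Measure.integral_toReal_rnDeriv hPM]
    simp
  have hintgQ : ∫ x, gQ x ∂M = 1 := by
    rw [hgQ]
    simp only
    rw [Measure.integral_toReal_rnDeriv hQM]
    simp
  -- KL values
  have hllrP : Integrable (llr P M) P := by
    rw [← MeasureTheory.integrable_rnDeriv_smul_iff hPM]
    simpa only [llr_def, smul_eq_mul] using hIgl
  have hllrQ : Integrable (llr Q M) Q := by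
    rw [← MeasureTheory.integrable_rnDeriv_smul_iff hQM]
    simpa only [llr_def, smul_eq_mul] using hIgQl
  set a : ℝ := ∫ x, g x * Real.log (g x) ∂M with ha
  set b : ℝ := ∫ x, gQ x * Real.log (gQ x) ∂M with hb
  have hklP : klDiv P M = ENNReal.ofReal a := by
    rw [klDiv, if_pos ⟨hPM, hllrP⟩, ha]
    congr 1
    rw [← MeasureTheory.integral_rnDeriv_smul hPM (f := llr P M)]
    simp only [llr_def, smul_eq_mul]
    rfl
  have hklQ : klDiv Q M = ENNReal.ofReal b := by
    rw [klDiv, if_pos ⟨hQM, hllrQ⟩, hb]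
    congr 1
    rw [← MeasureTheory.integral_rnDeriv_smul hQM (f := llr Q M)]
    simp only [llr_def, smul_eq_mul]
    rfl
  have hIgm1 : Integrable (fun x => g x - 1) M := hIg.sub (integrable_const 1)
  have hIgQm1 : Integrable (fun x => gQ x - 1) M := hIgQ.sub (integrable_const 1)
  have ha0 : 0 ≤ a := by
    have h1 : ∫ x, (g x - 1) ∂M ≤ a := by
      refine integral_mono_ae hIgm1 hIgl ?_
      filter_upwards [hae] with x hx using sub_one_le_mul_log hx.2.1
    have h2 : ∫ x, (g x - 1) ∂M = 0 := by
      simp [integral_sub hIg (integrable_const 1), hintg, measure_univ]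
    linarith
  have hb0 : 0 ≤ b := by
    have h1 : ∫ x, (gQ x - 1) ∂M ≤ b := by
      refine integral_mono_ae hIgQm1 hIgQl ?_
      filter_upwards [hae] with x hx using sub_one_le_mul_log hx.2.2.2.1
    have h2 : ∫ x, (gQ x - 1) ∂M = 0 := by
      simp [integral_sub hIgQ (integrable_const 1), hintgQ, measure_univ]
    linarith
  have hjs : 2 * (jsDiv P Q).toReal = a + b := by
    rw [jsDiv, ← hM, hklP, hklQ]
    rw [ENNReal.toReal_add (by simp [ENNReal.div_eq_top]) (by simp [ENNReal.div_eq_top])]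
    rw [ENNReal.toReal_div, ENNReal.toReal_div, ENNReal.toReal_ofReal ha0,
      ENNReal.toReal_ofReal hb0]
    norm_num
    ring
  -- change of measure for f
  have hfP : ∫ x, f x ∂P = ∫ x, g x * f x ∂M := by
    rw [← MeasureTheory.integral_rnDeriv_smul hPM (f := f)]
    simp only [smul_eq_mul]
    rfl
  have hfQ : ∫ x, f x ∂Q = ∫ x, gQ x * f x ∂M := by
    rw [← MeasureTheory.integral_rnDeriv_smul hQM (f := f)]
    simp only [smul_eq_mul]
    rfl
  -- integrabilities for the main chain
  have hIgf : Integrable (fun x => g x * f x) M := by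
    refine Integrable.mono' (integrable_const (2 * C))
      ((hgmeas.mul hf).aestronglyMeasurable) ?_
    filter_upwards [hae] with x hx
    rw [Real.norm_eq_abs, abs_mul, abs_of_nonneg hx.2.1, abs_of_nonneg (h0 x)]
    exact mul_le_mul hx.2.2.1 (hfC x) (h0 x) (by norm_num)
  have hIgQf : Integrable (fun x => gQ x * f x) M := by
    refine Integrable.mono' (integrable_const (2 * C))
      ((hgQmeas.mul hf).aestronglyMeasurable) ?_
    filter_upwards [hae] with x hx
    rw [Real.norm_eq_abs, abs_mul, abs_of_nonneg hx.2.2.2.1, abs_of_nonneg (h0 x)]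
    exact mul_le_mul hx.2.2.2.2 (hfC x) (h0 x) (by norm_num)
  have hIsub : Integrable (fun x => g x - gQ x) M := hIg.sub hIgQ
  have hIhalf : Integrable (fun x => (g x - gQ x) / 2) M := hIsub.div_const 2
  have hIabs : Integrable (fun x => |g x - 1|) M := (hIg.sub (integrable_const 1)).abs
  have hIali : Integrable (fun x => (g x - gQ x) / 2 + |g x - 1|) M := hIhalf.add hIabs
  have hIsq : Integrable (fun x => (g x - 1)^2) M := by
    refine Integrable.mono' (integrable_const 1)
      (((hgmeas.sub measurable_const).pow_const 2).aestronglyMeasurable) ?_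
    filter_upwards [hae] with x hx
    rw [Real.norm_eq_abs, abs_of_nonneg (sq_nonneg _)]
    nlinarith [hx.2.1, hx.2.2.1]
  -- step 1 : ∫ f dP - ∫ f dQ ≤ C * ∫ |g - 1| dM
  have step1 : ∫ x, f x ∂P - ∫ x, f x ∂Q ≤ C * ∫ x, |g x - 1| ∂M := by
    rw [hfP, hfQ, ← integral_sub hIgf hIgQf]
    have hle : ∫ x, (g x * f x - gQ x * f x) ∂M
        ≤ ∫ x, ((g x - gQ x) / 2 + |g x - 1|) * C ∂M := by
      refine integral_mono_ae (hIgf.sub hIgQf) (hIali.mul_const C) ?_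
      filter_upwards [hae] with x hx
      have h2 : g x - gQ x = 2 * (g x - 1) := by linarith [hx.1]
      rcases le_total (g x) 1 with hc | hc
      · have habs : |g x - 1| = 1 - g x := by rw [abs_of_nonpos (by linarith)]; ring
        have hfx0 := h0 x
        have : g x * f x - gQ x * f x = 2 * (g x - 1) * f x := by rw [← h2]; ring
        rw [this, habs, h2]
        have h1 : 2 * (g x - 1) * f x ≤ 0 :=
          mul_nonpos_of_nonpos_of_nonneg (by linarith) hfx0
        have h3 : (0:ℝ) ≤ (2 * (g x - 1) / 2 + (1 - g x)) * C := by
          have : 2 * (g x - 1) / 2 + (1 - g x) = 0 := by ring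
          rw [this, zero_mul]
        linarith
      · have habs : |g x - 1| = g x - 1 := abs_of_nonneg (by linarith)
        have : g x * f x - gQ x * f x = 2 * (g x - 1) * f x := by rw [← h2]; ring
        rw [this, habs, h2]
        have h4 : 2 * (g x - 1) * f x ≤ 2 * (g x - 1) * C :=
          mul_le_mul_of_nonneg_left (hfC x) (by linarith)
        have : (2 * (g x - 1) / 2 + (g x - 1)) * C = 2 * (g x - 1) * C := by ring
        rw [this]
        exact h4
    refine hle.trans (le_of_eq ?_)
    rw [integral_mul_const, integral_add hIhalf hIabs, integral_div,
      integral_sub hIg hIgQ, hintg, hintgQ]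
    ring
  -- step 2 : ∫ |g-1| dM ≤ sqrt (∫ (g-1)^2 dM)
  have step2 : ∫ x, |g x - 1| ∂M ≤ Real.sqrt (∫ x, (g x - 1)^2 ∂M) := by
    have hmem : MemLp (fun x => |g x - 1|) 2 M := by
      refine MemLp.of_bound ((hgmeas.sub measurable_const).abs.aestronglyMeasurable) 1 ?_
      filter_upwards [hae] with x hx
      rw [Real.norm_eq_abs, abs_abs]
      rw [abs_le]
      constructor <;> [linarith [hx.2.1]; linarith [hx.2.2.1]]
    have hvar := variance_nonneg (fun x => |g x - 1|) M
    rw [variance_eq_sub hmem] at hvar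
    have hsq : (∫ x, |g x - 1| ∂M)^2 ≤ ∫ x, (g x - 1)^2 ∂M := by
      have h1 : (fun x => |g x - 1|) ^ 2 = fun x => (g x - 1)^2 := by
        funext x
        simp [sq_abs]
      simp only [Pi.pow_apply] at hvar
      calc (∫ x, |g x - 1| ∂M)^2 ≤ ∫ x, |g x - 1| ^ 2 ∂M := by
            simpa using hvar
        _ = ∫ x, (g x - 1)^2 ∂M := by simp [sq_abs]
    rw [Real.le_sqrt (integral_nonneg fun x => abs_nonneg _)
      (integral_nonneg fun x => sq_nonneg _)]
    exact hsq
  -- step 3 : ∫ (g-1)^2 dM ≤ a + b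
  have step3 : ∫ x, (g x - 1)^2 ∂M ≤ a + b := by
    rw [ha, hb, ← integral_add hIgl hIgQl]
    refine integral_mono_ae hIsq (hIgl.add hIgQl) ?_
    filter_upwards [hae] with x hx
    have hs := sq_le_entropy_sum (g x - 1) ⟨by linarith [hx.2.1], by linarith [hx.2.2.1]⟩
    rw [show (1:ℝ) + (g x - 1) = g x from by ring,
      show (1:ℝ) - (g x - 1) = gQ x from by linarith [hx.1]] at hs
    exact hs
  -- conclude
  calc ∫ x, f x ∂P - ∫ x, f x ∂Q ≤ C * ∫ x, |g x - 1| ∂M := step1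
    _ ≤ C * Real.sqrt (∫ x, (g x - 1)^2 ∂M) := mul_le_mul_of_nonneg_left step2 hC0
    _ ≤ C * Real.sqrt (a + b) :=
        mul_le_mul_of_nonneg_left (Real.sqrt_le_sqrt step3) hC0
    _ = C * Real.sqrt (2 * (jsDiv P Q).toReal) := by rw [hjs]

lemma neg_log_integral_le {Z : Type*} [MeasurableSpace Z] (μ : Measure Z)
    [IsProbabilityMeasure μ] (f : Z → ℝ) (hm : Measurable f) (ε : ℝ) (hε : 0 < ε)
    (hε1 : ε ≤ 1) (hge : ∀ z, ε ≤ f z) (hle : ∀ z, f z ≤ 1) :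
    - Real.log (∫ z, f z ∂μ) ≤ ∫ z, - Real.log (f z) ∂μ := by
  have hIf : Integrable f μ := by
    refine Integrable.mono' (integrable_const 1) hm.aestronglyMeasurable ?_
    refine Filter.Eventually.of_forall fun z => ?_
    rw [Real.norm_eq_abs, abs_of_pos (lt_of_lt_of_le hε (hge z))]
    exact hle z
  have hIlog : Integrable (fun z => Real.log (f z)) μ := by
    refine Integrable.mono' (integrable_const (-Real.log ε))
      ((Real.measurable_log.comp hm).aestronglyMeasurable) ?_
    refine Filter.Eventually.of_forall fun z => ?_
    rw [Real.norm_eq_abs, abs_of_nonpos (Real.log_nonpos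
      (le_of_lt (lt_of_lt_of_le hε (hge z))) (hle z))]
    have := Real.log_le_log hε (hge z)
    linarith
  set a : ℝ := ∫ z, f z ∂μ with hadef
  have ha : ε ≤ a := by
    have h1 : ∫ z, (ε : ℝ) ∂μ ≤ a := integral_mono (integrable_const ε) hIf hge
    simpa [measure_univ] using h1
  have ha0 : 0 < a := lt_of_lt_of_le hε ha
  have hIsa : Integrable (fun z => f z - a) μ := hIf.sub (integrable_const a)
  have hIda : Integrable (fun z => (f z - a) / a) μ := hIsa.div_const a
  have hIq : Integrable (fun z => Real.log a + (f z - a) / a) μ :=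
    (integrable_const (Real.log a)).add hIda
  have key : ∫ z, Real.log (f z) ∂μ ≤ Real.log a := by
    have hpt : ∀ z, Real.log (f z) ≤ Real.log a + (f z - a) / a := by
      intro z
      have hfz : 0 < f z := lt_of_lt_of_le hε (hge z)
      have h1 : Real.log (f z / a) = Real.log (f z) - Real.log a :=
        Real.log_div (ne_of_gt hfz) (ne_of_gt ha0)
      have h2 : Real.log (f z / a) ≤ f z / a - 1 :=
        Real.log_le_sub_one_of_pos (by positivity)
      have h3 : f z / a - 1 = (f z - a) / a := by field_simp
      linarith [h1 ▸ h2, h3 ▸ (le_refl (f z / a - 1))]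
    have h4 : ∫ z, Real.log (f z) ∂μ ≤ ∫ z, (Real.log a + (f z - a) / a) ∂μ :=
      integral_mono hIlog hIq hpt
    have h5 : ∫ z, (Real.log a + (f z - a) / a) ∂μ = Real.log a := by
      rw [integral_add (integrable_const (Real.log a)) hIda, integral_const,
        integral_div, integral_sub hIf (integrable_const a), integral_const]
      simp [measure_univ]
      exact Or.inl (sub_self _)
    linarith
  rw [integral_neg]
  linarith

/-- **Theorem 1 (RAIN paper).** Let `ν_s, ν_t` be the source and target data–label
distributions on `X × Y`, `κ : X → Z` a Markov kernel (the representation map), and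
`p̂ : Y × Z → (0,1]` a measurable predictor with `−log p̂ ≤ C` (Assumption 1). Let
`π_s, π_t` be the joint distributions of `(y, z)` induced by `(x,y) ∼ ν_s` (resp.
`ν_t`) and `z ∼ κ_x`, and let `π_sub` be a probability measure on `Y × Z` (the
subnetwork's joint label–representation distribution) with
`∫ log p̂ dπ_s ≤ ∫ log p̂ dπ_sub` (Assumption 2). Then the target loss
`l_t = E_{(x,y)∼ν_t}[−log ∫_Z p̂(y,z) dκ_x(z)]` satisfies
`l_t ≤ ∫ (−log p̂) dπ_s + C·√(2·D_JS(π_t ‖ π_sub))`. -/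
theorem target_loss_le_source_loss_add_js_of_kernel
    {X Y Z : Type*} [MeasurableSpace X] [MeasurableSpace Y] [MeasurableSpace Z]
    (νs νt : Measure (X × Y)) [IsProbabilityMeasure νs] [IsProbabilityMeasure νt]
    (κ : Kernel X Z) [IsMarkovKernel κ]
    (phat : Y × Z → ℝ) (hmeas : Measurable phat)
    (hpos : ∀ q, 0 < phat q) (hle : ∀ q, phat q ≤ 1)
    (C : ℝ) (hC : ∀ q, - Real.log (phat q) ≤ C)
    (πs πt : Measure (Y × Z))
    (hπs : πs = Measure.map (fun p : (X × Y) × Z => (p.1.2, p.2))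
      (νs ⊗ₘ (κ.comap Prod.fst measurable_fst)))
    (hπt : πt = Measure.map (fun p : (X × Y) × Z => (p.1.2, p.2))
      (νt ⊗ₘ (κ.comap Prod.fst measurable_fst)))
    (πsub : Measure (Y × Z)) [IsProbabilityMeasure πsub]
    (hsub : ∫ q, Real.log (phat q) ∂πs ≤ ∫ q, Real.log (phat q) ∂πsub) :
    ∫ p, - Real.log (∫ z, phat (p.2, z) ∂(κ p.1)) ∂νt
      ≤ ∫ q, - Real.log (phat q) ∂πs
        + C * Real.sqrt (2 * (jsDiv πt πsub).toReal) := by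
  -- basic facts
  have hYZne : Nonempty (Y × Z) := by
    by_contra h
    rw [not_nonempty_iff] at h
    have h1 := measure_univ (μ := πsub)
    rw [Set.univ_eq_empty_iff.mpr h] at h1
    simp at h1
  have hF0 : ∀ q, 0 ≤ - Real.log (phat q) := fun q => by
    have := Real.log_nonpos (le_of_lt (hpos q)) (hle q)
    linarith
  have hC0 : 0 ≤ C := (hF0 (Classical.choice hYZne)).trans (hC _)
  have hεpos : (0:ℝ) < Real.exp (-C) := Real.exp_pos _
  have hε1 : Real.exp (-C) ≤ 1 := Real.exp_le_one_iff.mpr (by linarith)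
  have hεle : ∀ q, Real.exp (-C) ≤ phat q := fun q => by
    have h1 : -C ≤ Real.log (phat q) := by linarith [hC q]
    calc Real.exp (-C) ≤ Real.exp (Real.log (phat q)) := Real.exp_le_exp.mpr h1
      _ = phat q := Real.exp_log (hpos q)
  set κ' : Kernel (X × Y) Z := κ.comap Prod.fst measurable_fst with hκ'def
  have hκ' : ∀ p : X × Y, κ' p = κ p.1 := fun p => Kernel.comap_apply κ measurable_fst p
  have hmap : Measurable (fun p : (X × Y) × Z => (p.1.2, p.2)) :=
    (measurable_snd.comp measurable_fst).prodMk measurable_snd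
  set F : Y × Z → ℝ := fun q => - Real.log (phat q) with hFdef
  have hFmeas : Measurable F := (Real.measurable_log.comp hmeas).neg
  have hFC : ∀ q, F q ≤ C := hC
  haveI : IsProbabilityMeasure πt := by
    rw [hπt]
    exact Measure.isProbabilityMeasure_map hmap.aemeasurable
  -- Jensen step, pointwise
  have hJ : ∀ p : X × Y, - Real.log (∫ z, phat (p.2, z) ∂(κ p.1))
      ≤ ∫ z, F (p.2, z) ∂(κ p.1) := by
    intro p
    exact neg_log_integral_le (κ p.1) (fun z => phat (p.2, z))
      (hmeas.comp (measurable_const.prodMk measurable_id)) (Real.exp (-C)) hεpos hε1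
      (fun z => hεle _) (fun z => hle _)
  -- measurability of the two integrands over νt
  have hSM1 : StronglyMeasurable (fun p : X × Y => ∫ z, phat (p.2, z) ∂(κ' p)) :=
    (hmeas.comp hmap).stronglyMeasurable.integral_kernel_prod_right'
  have hSM2 : StronglyMeasurable (fun p : X × Y => ∫ z, F (p.2, z) ∂(κ' p)) :=
    (hFmeas.comp hmap).stronglyMeasurable.integral_kernel_prod_right'
  have hbound : ∀ p : X × Y, Real.exp (-C) ≤ ∫ z, phat (p.2, z) ∂(κ p.1) ∧
      ∫ z, phat (p.2, z) ∂(κ p.1) ≤ 1 := by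
    intro p
    have hIf : Integrable (fun z => phat (p.2, z)) (κ p.1) := by
      refine Integrable.mono' (integrable_const 1)
        ((hmeas.comp (measurable_const.prodMk measurable_id)).aestronglyMeasurable) ?_
      refine Filter.Eventually.of_forall fun z => ?_
      rw [Real.norm_eq_abs, abs_of_pos (hpos _)]
      exact hle _
    constructor
    · have h1 : ∫ z, Real.exp (-C) ∂(κ p.1) ≤ ∫ z, phat (p.2, z) ∂(κ p.1) :=
        integral_mono (integrable_const _) hIf (fun z => hεle _)
      simpa [measure_univ] using h1
    · have h1 : ∫ z, phat (p.2, z) ∂(κ p.1) ≤ ∫ z, (1:ℝ) ∂(κ p.1) :=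
        integral_mono hIf (integrable_const _) (fun z => hle _)
      simpa [measure_univ] using h1
  have hI1 : Integrable (fun p : X × Y => - Real.log (∫ z, phat (p.2, z) ∂(κ p.1))) νt := by
    refine Integrable.mono' (integrable_const C) ?_ ?_
    · have : (fun p : X × Y => - Real.log (∫ z, phat (p.2, z) ∂(κ p.1)))
          = fun p : X × Y => - Real.log (∫ z, phat (p.2, z) ∂(κ' p)) := by
        funext p; rw [hκ']
      rw [this]
      exact ((Real.measurable_log.comp hSM1.measurable).neg).aestronglyMeasurable
    · refine Filter.Eventually.of_forall fun p => ?_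
      have hb := hbound p
      rw [Real.norm_eq_abs, abs_of_nonneg (by
        have := Real.log_nonpos (le_of_lt (lt_of_lt_of_le hεpos hb.1)) hb.2
        linarith)]
      have h2 : -C ≤ Real.log (∫ z, phat (p.2, z) ∂(κ p.1)) := by
        calc -C = Real.log (Real.exp (-C)) := (Real.log_exp _).symm
          _ ≤ _ := Real.log_le_log hεpos hb.1
      linarith
  have hI2 : Integrable (fun p : X × Y => ∫ z, F (p.2, z) ∂(κ p.1)) νt := by
    refine Integrable.mono' (integrable_const C) ?_ ?_
    · have : (fun p : X × Y => ∫ z, F (p.2, z) ∂(κ p.1))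
          = fun p : X × Y => ∫ z, F (p.2, z) ∂(κ' p) := by
        funext p; rw [hκ']
      rw [this]
      exact hSM2.aestronglyMeasurable
    · refine Filter.Eventually.of_forall fun p => ?_
      rw [Real.norm_eq_abs, abs_of_nonneg (integral_nonneg fun z => hF0 _)]
      have h1 : ∫ z, F (p.2, z) ∂(κ p.1) ≤ ∫ z, (C:ℝ) ∂(κ p.1) :=
        integral_mono (by
          refine Integrable.mono' (integrable_const C)
            ((hFmeas.comp (measurable_const.prodMk measurable_id)).aestronglyMeasurable) ?_
          refine Filter.Eventually.of_forall fun z => ?_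
          rw [Real.norm_eq_abs, abs_of_nonneg (hF0 _)]
          exact hFC _) (integrable_const C) (fun z => hFC _)
      simpa [measure_univ] using h1
  have stepA : ∫ p, - Real.log (∫ z, phat (p.2, z) ∂(κ p.1)) ∂νt
      ≤ ∫ p, (∫ z, F (p.2, z) ∂(κ p.1)) ∂νt := integral_mono hI1 hI2 hJ
  -- step B : identify with ∫ F dπt
  have hIcomp : Integrable (fun pz : (X × Y) × Z => F (pz.1.2, pz.2)) (νt ⊗ₘ κ') := by
    refine Integrable.mono' (integrable_const C)
      ((hFmeas.comp hmap).aestronglyMeasurable) ?_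
    refine Filter.Eventually.of_forall fun pz => ?_
    rw [Real.norm_eq_abs, abs_of_nonneg (hF0 _)]
    exact hFC _
  have stepB : ∫ p, (∫ z, F (p.2, z) ∂(κ p.1)) ∂νt = ∫ q, F q ∂πt := by
    rw [hπt, integral_map hmap.aemeasurable hFmeas.aestronglyMeasurable]
    rw [Measure.integral_compProd hIcomp]
    refine integral_congr_ae (Filter.Eventually.of_forall fun p => ?_)
    simp [hκ']
  -- step C : Pinsker
  have stepC : ∫ q, F q ∂πt - ∫ q, F q ∂πsub
      ≤ C * Real.sqrt (2 * (jsDiv πt πsub).toReal) :=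
    pinsker_js πt πsub F hFmeas C hF0 hFC
  -- step D : assumption 2
  have stepD : ∫ q, F q ∂πsub ≤ ∫ q, F q ∂πs := by
    rw [hFdef]
    simp only
    rw [integral_neg, integral_neg]
    exact neg_le_neg hsub
  calc ∫ p, - Real.log (∫ z, phat (p.2, z) ∂(κ p.1)) ∂νt
      ≤ ∫ p, (∫ z, F (p.2, z) ∂(κ p.1)) ∂νt := stepA
    _ = ∫ q, F q ∂πt := stepB
    _ ≤ ∫ q, F q ∂πsub + C * Real.sqrt (2 * (jsDiv πt πsub).toReal) := by linarith [stepC]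
    _ ≤ ∫ q, - Real.log (phat q) ∂πs + C * Real.sqrt (2 * (jsDiv πt πsub).toReal) := by
        have := stepD
        simp only [hFdef] at this ⊢
        linarith
end
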